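/- arXiv:1202.4741 — 2 statements merged into one kernel-verified Lean document; each statement's English description precedes it below -/
import Mathlib

section
/- Let ε > 0 and let a, a' ∈ ℝ with |a − a'| ≤ 1. Let μ be the measure on ℝ with density x ↦ (ε/2)·exp(−ε·|x − a|) with respect to Lebesgue measure, and μ' the measure with density x ↦ (ε/2)·exp(−ε·|x − a'|). Then for every measurable set S ⊆ ℝ, μ(S) ≤ exp(ε)·μ'(S). (The Laplace mechanism applied to a real-valued sensitivity-1 quantity is ε-differentially private.) -/
/-! By the triangle inequality the two Laplace densities have pointwise ratio at most
`exp (ε * |a - a'|) ≤ exp ε`, and a pointwise bound on densities integrates to the same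
bound on the measures of every set. -/

open MeasureTheory Real

theorem MeasureTheory.withDensity_le_smul_withDensity {α : Type*} [MeasurableSpace α]
    {μ : Measure α} {f g : α → ENNReal} {c : ENNReal} (hc : c ≠ ⊤) (hfg : ∀ x, f x ≤ c * g x) :
    μ.withDensity f ≤ c • μ.withDensity g := by
  rw [← withDensity_smul' c g hc]
  exact withDensity_mono (Filter.Eventually.of_forall hfg)

theorem Real.exp_neg_mul_abs_sub_le {ε : ℝ} (hε : 0 ≤ ε) (x a a' : ℝ) :
    exp (-ε * |x - a|) ≤ exp (ε * |a - a'|) * exp (-ε * |x - a'|) := by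
  rw [← exp_add, exp_le_exp]
  have htriangle : |x - a'| ≤ |x - a| + |a - a'| := abs_sub_le x a a'
  nlinarith

theorem laplace_density_le_exp_mul {ε a a' : ℝ} (hε : 0 ≤ ε) (ha : |a - a'| ≤ 1) (x : ℝ) :
    ε / 2 * exp (-ε * |x - a|) ≤ exp ε * (ε / 2 * exp (-ε * |x - a'|)) := by
  calc ε / 2 * exp (-ε * |x - a|)
      ≤ ε / 2 * (exp (ε * |a - a'|) * exp (-ε * |x - a'|)) := by
        gcongr
        exact exp_neg_mul_abs_sub_le hε x a a'
    _ ≤ ε / 2 * (exp ε * exp (-ε * |x - a'|)) := by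
        gcongr
        exact mul_le_of_le_one_right hε ha
    _ = exp ε * (ε / 2 * exp (-ε * |x - a'|)) := by ring

/-- The Laplace mechanism on a real-valued, sensitivity-1 quantity is
`ε`-differentially private: if `|a - a'| ≤ 1`, then the distribution of `a + Lap(1/ε)`
assigns to every measurable set at most `exp ε` times the mass assigned by the
distribution of `a' + Lap(1/ε)`. -/
theorem laplace_mechanism_dp (ε a a' : ℝ) (hε : 0 < ε) (ha : |a - a'| ≤ 1) :
    ∀ S : Set ℝ, MeasurableSet S →
      (volume.withDensity fun x => ENNReal.ofReal ((ε / 2) * Real.exp (-ε * |x - a|))) S ≤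
        ENNReal.ofReal (Real.exp ε) *
          (volume.withDensity fun x => ENNReal.ofReal ((ε / 2) * Real.exp (-ε * |x - a'|))) S := by
  intro S _
  refine withDensity_le_smul_withDensity ENNReal.ofReal_ne_top (fun x => ?_) S
  rw [← ENNReal.ofReal_mul (exp_nonneg ε)]
  exact ENNReal.ofReal_le_ofReal (laplace_density_le_exp_mul hε.le ha x)
end

section
/- Let α ∈ (0,1). For each integer j ≥ 1 let n_j be an integer with n_j ≥ 100·(log(j+1) + 1)/α², and let (X_{j,i})_{j ≥ 1, 1 ≤ i ≤ n_j} be a family of mutually independent random variables, all taking values in [0,1] with common mean μ. Then the probability that there exists some j ≥ 1 with |(1/n_j)·Σ_{i=1}^{n_j} X_{j,i} − μ| ≥ α/4 is less than 1/12. -/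
/-!
Each epoch is handled by Hoeffding's inequality: the `n j` samples of epoch `j` are independent
with values in `[0,1]`, so their average deviates from the mean by at least `α/4` with
probability at most `2 exp(-2 n_j (α/4)²) ≤ 2 e^{-25/2} (j+1)^{-25/2}`. Bounding `(j+1)^{-25/2}`
by `(j+1)^{-2}` and summing with `∑ 1/(j+1)² = π²/6`, the union bound over all epochs gives
at most `e^{-25/2} π²/3 < 1/12`.
-/

open MeasureTheory Real Finset
open scoped NNReal

lemma exp_neg_mul_log_add_one_le {c : ℝ} (hc : 2 ≤ c) (j : ℕ) :
    exp (-(c * (log (j + 1) + 1))) ≤ exp (-c) * (1 / ((j : ℝ) + 1) ^ 2) := by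
  have hj : (0 : ℝ) < j + 1 := by positivity
  have hlog : 0 ≤ log ((j : ℝ) + 1) := log_nonneg (by simp)
  calc exp (-(c * (log (j + 1) + 1)))
      ≤ exp (-c + -(2 * log (j + 1))) := exp_le_exp.mpr (by nlinarith)
    _ = exp (-c) * (1 / ((j : ℝ) + 1) ^ 2) := by
      rw [exp_add, exp_neg (2 * _), ← Nat.cast_ofNat, exp_nat_mul, exp_log hj, one_div]

lemma exp_neg_two_mul_sq_le_of_epochSize_le {α N : ℝ} (hα : 0 < α) {j : ℕ}
    (hN : 100 * (log (j + 1) + 1) / α ^ 2 ≤ N) :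
    exp (-2 * N * (α / 4) ^ 2) ≤ exp (-(25 / 2)) * (1 / ((j : ℝ) + 1) ^ 2) := by
  rw [div_le_iff₀ (by positivity)] at hN
  calc exp (-2 * N * (α / 4) ^ 2)
      ≤ exp (-(25 / 2 * (log (j + 1) + 1))) := exp_le_exp.mpr (by nlinarith)
    _ ≤ exp (-(25 / 2)) * (1 / ((j : ℝ) + 1) ^ 2) := exp_neg_mul_log_add_one_le (by norm_num) j

lemma hasSum_one_div_nat_add_one_sq :
    HasSum (fun j : ℕ => 1 / ((j : ℝ) + 1) ^ 2) (π ^ 2 / 6) := by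
  simpa using (hasSum_nat_add_iff' 1).mpr hasSum_zeta_two

lemma two_mul_exp_neg_mul_pi_sq_div_six_lt : 2 * exp (-(25 / 2)) * (π ^ 2 / 6) < 1 / 12 := by
  have h_exp := quadratic_le_exp_of_nonneg (by norm_num : (0 : ℝ) ≤ 25 / 2)
  have h_pi : π ^ 2 < 10 := by nlinarith [pi_lt_d2, pi_pos]
  rw [exp_neg, mul_comm 2, mul_assoc, inv_mul_lt_iff₀ (exp_pos _)]
  linarith

lemma le_abs_average_sub_iff {N : ℕ} (hN : 0 < N) (x : ℕ → ℝ) (m δ : ℝ) :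
    δ ≤ |(1 / (N : ℝ)) * ∑ i ∈ range N, x i - m| ↔ N * δ ≤ |∑ i ∈ range N, (x i - m)| := by
  have hN' : (0 : ℝ) < N := Nat.cast_pos.mpr hN
  have h_sum : ∑ i ∈ range N, (x i - m) = N * ((1 / (N : ℝ)) * ∑ i ∈ range N, x i - m) := by
    rw [sum_sub_distrib, sum_const, card_range, nsmul_eq_mul]
    field_simp
  rw [h_sum, abs_mul, abs_of_pos hN', mul_le_mul_iff_right₀ hN']

lemma MeasureTheory.measure_iUnion_le_ofReal_of_hasSum {Ω : Type*} [MeasurableSpace Ω]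
    {μ : Measure Ω} [IsFiniteMeasure μ] {E : ℕ → Set Ω} {b : ℕ → ℝ} {B : ℝ}
    (hE : ∀ j, μ.real (E j) ≤ b j) (hb : HasSum b B) :
    μ (⋃ j, E j) ≤ ENNReal.ofReal B :=
  calc μ (⋃ j, E j)
      ≤ ∑' j, μ (E j) := measure_iUnion_le _
    _ ≤ ∑' j, ENNReal.ofReal (b j) := ENNReal.tsum_le_tsum fun j =>
        (ofReal_measureReal).symm.le.trans (ENNReal.ofReal_le_ofReal (hE j))
    _ = ENNReal.ofReal B := by
        rw [← ENNReal.ofReal_tsum_of_nonneg (fun j => measureReal_nonneg.trans (hE j))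
          hb.summable, hb.tsum_eq]

namespace ProbabilityTheory

variable {Ω ι : Type*} [MeasurableSpace Ω] {μ : Measure Ω}

lemma HasSubgaussianMGF.measureReal_abs_sum_ge_le_of_iIndepFun {X : ι → Ω → ℝ}
    (h_indep : iIndepFun X μ) {c : ι → ℝ≥0} {s : Finset ι}
    (h_subG : ∀ i ∈ s, HasSubgaussianMGF (X i) (c i) μ) {ε : ℝ} (hε : 0 ≤ ε) :
    μ.real {ω | ε ≤ |∑ i ∈ s, X i ω|} ≤ 2 * exp (-ε ^ 2 / (2 * ∑ i ∈ s, c i)) := by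
  have : IsProbabilityMeasure μ := h_indep.isProbabilityMeasure
  have h_upper := measure_sum_ge_le_of_iIndepFun h_indep h_subG hε
  have h_lower := measure_sum_ge_le_of_iIndepFun (X := fun i ω => -X i ω)
    (h_indep.comp (fun _ => Neg.neg) fun _ => measurable_neg) (fun i hi => (h_subG i hi).neg) hε
  have h_split : {ω | ε ≤ |∑ i ∈ s, X i ω|} ⊆
      {ω | ε ≤ ∑ i ∈ s, X i ω} ∪ {ω | ε ≤ ∑ i ∈ s, -X i ω} := by
    intro ω hω
    simp only [Set.mem_union, Set.mem_ofPred_eq, sum_neg_distrib]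
    exact (le_abs'.mp hω).symm.imp id fun h => by linarith
  calc μ.real {ω | ε ≤ |∑ i ∈ s, X i ω|}
      ≤ μ.real {ω | ε ≤ ∑ i ∈ s, X i ω} + μ.real {ω | ε ≤ ∑ i ∈ s, -X i ω} :=
        (measureReal_mono h_split).trans (measureReal_union_le _ _)
    _ ≤ 2 * exp (-ε ^ 2 / (2 * ∑ i ∈ s, c i)) := by linarith

lemma measureReal_abs_sum_sub_integral_ge_le_of_mem_Icc [IsProbabilityMeasure μ]
    {X : ι → Ω → ℝ} (h_indep : iIndepFun X μ) {a b : ℝ} {s : Finset ι}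
    (hX : ∀ i ∈ s, AEMeasurable (X i) μ) (hab : ∀ i ∈ s, ∀ᵐ ω ∂μ, X i ω ∈ Set.Icc a b)
    {ε : ℝ} (hε : 0 ≤ ε) :
    μ.real {ω | ε ≤ |∑ i ∈ s, (X i ω - μ[X i])|} ≤
      2 * exp (-2 * ε ^ 2 / (#s * (b - a) ^ 2)) := by
  have h_centered : iIndepFun (fun i ω => X i ω - μ[X i]) μ :=
    (h_indep.comp (fun i (x : ℝ) => x - μ[X i]) (fun _ => measurable_sub_const _) :)
  convert HasSubgaussianMGF.measureReal_abs_sum_ge_le_of_iIndepFun h_centered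
    (fun i hi => hasSubgaussianMGF_of_mem_Icc (hX i hi) (hab i hi)) hε using 3
  simp only [sum_const, nsmul_eq_mul, NNReal.coe_mul, NNReal.coe_natCast, NNReal.coe_pow,
    NNReal.coe_div, coe_nnnorm, norm_eq_abs, NNReal.coe_ofNat, div_pow, sq_abs]
  rw [show 2 * (#s * ((b - a) ^ 2 / 2 ^ 2)) = #s * (b - a) ^ 2 / 2 by ring, div_div_eq_mul_div]
  ring

lemma measureReal_abs_average_sub_ge_le [IsProbabilityMeasure μ] {N : ℕ} (hN : 0 < N)
    {Y : ℕ → Ω → ℝ} (h_indep : iIndepFun (fun i : Fin N => Y i) μ)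
    (hY : ∀ i < N, AEMeasurable (Y i) μ) (h01 : ∀ i < N, ∀ᵐ ω ∂μ, Y i ω ∈ Set.Icc 0 1)
    {m : ℝ} (hm : ∀ i < N, μ[Y i] = m) {δ : ℝ} (hδ : 0 ≤ δ) :
    μ.real {ω | δ ≤ |(1 / (N : ℝ)) * ∑ i ∈ range N, Y i ω - m|} ≤ 2 * exp (-2 * N * δ ^ 2) := by
  have h := measureReal_abs_sum_sub_integral_ge_le_of_mem_Icc h_indep (s := univ)
    (fun i _ => hY i i.2) (fun i _ => h01 i i.2) (by positivity : 0 ≤ N * δ)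
  simp only [fun i : Fin N => hm i i.2, card_univ, Fintype.card_fin, sub_zero, one_pow,
    mul_one] at h
  have hN' : (N : ℝ) ≠ 0 := by positivity
  convert h using 3
  · ext ω
    rw [le_abs_average_sub_iff hN, Fin.sum_univ_eq_sum_range (fun i => Y i ω - m)]
  · field_simp

end ProbabilityTheory

/-- Union bound over all epochs: with epoch `j` containing `n j ≥ 100(log(j+1)+1)/α²`
samples, and all samples across all epochs mutually independent with values in `[0,1]`
and common mean `m`, the probability that some epoch's empirical average deviates
from `m` by at least `α/4` is less than `1/12`. -/
theorem all_epochs_chernoff_union_bound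
    {Ω : Type*} [MeasurableSpace Ω] (ℙ : Measure Ω) [IsProbabilityMeasure ℙ]
    (α : ℝ) (hα : α ∈ Set.Ioo (0 : ℝ) 1)
    (n : ℕ → ℕ) (hn : ∀ j, 1 ≤ j → (n j : ℝ) ≥ 100 * (Real.log (j + 1) + 1) / α ^ 2)
    (X : ℕ → ℕ → Ω → ℝ) (hmeas : ∀ j i, Measurable (X j i))
    (hindep : ProbabilityTheory.iIndepFun
      (fun p : {p : ℕ × ℕ // 1 ≤ p.1 ∧ p.2 < n p.1} => X p.1.1 p.1.2) ℙ)
    (hrange : ∀ j i, 1 ≤ j → i < n j → ∀ ω, X j i ω ∈ Set.Icc (0 : ℝ) 1)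
    (m : ℝ) (hmean : ∀ j i, 1 ≤ j → i < n j → ∫ ω, X j i ω ∂ℙ = m) :
    ℙ {ω | ∃ j, 1 ≤ j ∧
        |(1 / (n j : ℝ)) * ∑ i ∈ Finset.range (n j), X j i ω - m| ≥ α / 4} < 1 / 12 := by
  have hα0 : 0 < α := hα.1
  set E : ℕ → Set Ω := fun j =>
    {ω | 1 ≤ j ∧ α / 4 ≤ |(1 / (n j : ℝ)) * ∑ i ∈ range (n j), X j i ω - m|}
  have h_epoch (j : ℕ) : ℙ.real (E j) ≤ 2 * exp (-(25 / 2)) * (1 / ((j : ℝ) + 1) ^ 2) := by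
    by_cases hj : 1 ≤ j
    swap
    · simp only [E, hj, false_and, Set.ofPred_false, measureReal_empty]
      positivity
    have hN : 0 < n j := by
      have := log_nonneg (by simp : (1 : ℝ) ≤ j + 1)
      exact Nat.cast_pos.mp ((by positivity : (0 : ℝ) < _).trans_le (hn j hj))
    have h_indep : ProbabilityTheory.iIndepFun (fun i : Fin (n j) => X j i) ℙ :=
      hindep.precomp (g := fun i : Fin (n j) =>
        (⟨(j, i), hj, i.2⟩ : {p : ℕ × ℕ // 1 ≤ p.1 ∧ p.2 < n p.1})) fun i i' h => by
        simpa [Fin.ext_iff] using h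
    calc ℙ.real (E j)
        ≤ 2 * exp (-2 * n j * (α / 4) ^ 2) := by
          simpa only [E, hj, true_and] using
            ProbabilityTheory.measureReal_abs_average_sub_ge_le hN h_indep
              (fun i _ => (hmeas j i).aemeasurable) (fun i hi => ae_of_all _ (hrange j i hj hi))
              (fun i hi => hmean j i hj hi) (by positivity)
      _ ≤ 2 * exp (-(25 / 2)) * (1 / ((j : ℝ) + 1) ^ 2) := by
          linarith [exp_neg_two_mul_sq_le_of_epochSize_le hα0 (hn j hj)]
  calc ℙ {ω | ∃ j, 1 ≤ j ∧ |(1 / (n j : ℝ)) * ∑ i ∈ range (n j), X j i ω - m| ≥ α / 4}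
      = ℙ (⋃ j, E j) := by congr 1; ext ω; simp [E]
    _ ≤ ENNReal.ofReal (2 * exp (-(25 / 2)) * (π ^ 2 / 6)) :=
        measure_iUnion_le_ofReal_of_hasSum h_epoch (hasSum_one_div_nat_add_one_sq.mul_left _)
    _ < ENNReal.ofReal (1 / 12) :=
        (ENNReal.ofReal_lt_ofReal_iff (by norm_num)).mpr two_mul_exp_neg_mul_pi_sq_div_six_lt
    _ = 1 / 12 := by rw [ENNReal.ofReal_div_of_pos (by norm_num)]; simp
end
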